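/- Crop invariance of the linear-interpolation probability path: with the harmonic prior as above, let x_1 ∈ R^{3N} be fixed data, x_0 ~ q^{(N)}, and x_t = (1-t)·x_0 + t·x_1 for t ∈ [0,1]. Then the distribution of the crop x_t[i:i+M] equals the distribution of (1-t)·y_0 + t·x_1[i:i+M] where y_0 ~ q^{(M)}, up to a global translation. -/

import Mathlib

open MeasureTheory ProbabilityTheory
open scoped NNReal

noncomputable section

/-- marginal of an iid product along an injective reindexing -/
lemma pi_map_comp_injective {ι ι' : Type*} [Fintype ι] [Fintype ι'] {E : Type*}
    [MeasurableSpace E] (ν : Measure E) [IsProbabilityMeasure ν]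
    (f : ι' → ι) (hf : Function.Injective f) :
    (Measure.pi fun _ : ι => ν).map (fun x => x ∘ f) = Measure.pi fun _ : ι' => ν := by
  classical
  symm
  apply Measure.pi_eq
  intro s hs
  have hg : Measurable (fun x : ι → E => x ∘ f) :=
    measurable_pi_lambda _ fun l => measurable_pi_apply (f l)
  rw [Measure.map_apply hg (MeasurableSet.univ_pi hs)]
  have hpre : (fun x : ι → E => x ∘ f) ⁻¹' (Set.pi Set.univ s)
      = Set.pi Set.univ (fun k => ⋂ (l : ι') (_ : f l = k), s l) := by
    ext x
    simp only [Set.mem_preimage, Set.mem_pi, Set.mem_univ, forall_true_left, Set.mem_iInter,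
      Function.comp]
    constructor
    · intro hx k l hl; subst hl; exact hx l
    · intro hx l; exact hx (f l) l rfl
  rw [hpre, Measure.pi_pi]
  have h1 : ∀ k ∉ Finset.univ.image f, ν (⋂ (l : ι') (_ : f l = k), s l) = 1 := by
    intro k hk
    have : (⋂ (l : ι') (_ : f l = k), s l) = Set.univ := by
      ext x; simp only [Set.mem_iInter, Set.mem_univ, iff_true]
      intro l hl
      exact absurd (Finset.mem_image.mpr ⟨l, Finset.mem_univ l, hl⟩) hk
    rw [this]; exact measure_univ
  rw [← Finset.prod_subset (Finset.subset_univ (Finset.univ.image f)) (fun k _ hk => h1 k hk),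
    Finset.prod_image (fun a _ b _ hab => hf hab)]
  apply Finset.prod_congr rfl
  intro l _
  congr 1
  ext x
  simp only [Set.mem_iInter]
  constructor
  · intro hx; exact hx l rfl
  · intro hx l' hl'; rwa [hf hl']

lemma sum_filter_lt_eq {E : Type*} [AddCommMonoid E] {N : ℕ} (k : Fin N) (f : Fin N → E) :
    ∑ j ∈ Finset.univ.filter (fun j : Fin N => j < k), f j
      = ∑ n ∈ Finset.range (k : ℕ), (if hn : n < N then f ⟨n, hn⟩ else 0) := by
  rw [Finset.sum_filter]
  have h1 : ∀ j : Fin N, (if j < k then f j else 0)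
      = (fun n => if n < (k : ℕ) then (if hn : n < N then f ⟨n, hn⟩ else 0) else 0) (j : ℕ) := by
    intro j
    simp only [Fin.lt_def, j.isLt, dif_pos]
  rw [Finset.sum_congr rfl (fun j _ => h1 j),
    Fin.sum_univ_eq_sum_range (fun n => if n < (k : ℕ) then (if hn : n < N then f ⟨n, hn⟩ else 0) else 0) N,
    ← Finset.sum_filter]
  apply Finset.sum_congr
  · ext n; simp only [Finset.mem_filter, Finset.mem_range]
    exact ⟨fun h => h.2, fun h => ⟨lt_of_lt_of_le h k.isLt.le, h⟩⟩
  · intros; rfl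

lemma sum_crop_shift {E : Type*} [AddCommGroup E] {N M i : ℕ} (hM : 0 < M) (h : i + M ≤ N)
    (inc : Fin N → E) (j : Fin M) (hj : i + (j : ℕ) < N) (h0 : i + ((⟨0, hM⟩ : Fin M) : ℕ) < N) :
    ∑ j' ∈ Finset.univ.filter (fun j' : Fin N => j' < ⟨i + (j : ℕ), hj⟩), inc j'
      - ∑ j' ∈ Finset.univ.filter
          (fun j' : Fin N => j' < ⟨i + ((⟨0, hM⟩ : Fin M) : ℕ), h0⟩), inc j'
    = ∑ l ∈ Finset.univ.filter (fun l : Fin M => l < j),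
        inc ⟨i + (l : ℕ), by omega⟩ := by
  rw [sum_filter_lt_eq, sum_filter_lt_eq,
    sum_filter_lt_eq j (fun l : Fin M => inc ⟨i + (l : ℕ), by omega⟩)]
  have hv : ((⟨i + ((⟨0, hM⟩ : Fin M) : ℕ), h0⟩ : Fin N) : ℕ) = i := rfl
  have hv2 : ((⟨i + (j : ℕ), hj⟩ : Fin N) : ℕ) = i + (j : ℕ) := rfl
  rw [hv, hv2, ← Finset.sum_Ico_eq_sub _ (Nat.le_add_right i (j : ℕ)),
    Finset.sum_Ico_eq_sum_range]
  simp only [Nat.add_sub_cancel_left]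
  apply Finset.sum_congr rfl
  intro n hn
  rw [Finset.mem_range] at hn
  rw [dif_pos (by omega : i + n < N), dif_pos (by omega : n < M)]

/-- The isotropic centered Gaussian `N(0, v·I₃)` on `ℝ³`. -/
def gaussian3 (v : ℝ≥0) : Measure (EuclideanSpace ℝ (Fin 3)) :=
  (Measure.pi fun _ : Fin 3 => gaussianReal 0 v).map
    (MeasurableEquiv.toLp 2 (Fin 3 → ℝ))

instance gaussian3_prob (v : ℝ≥0) : IsProbabilityMeasure (gaussian3 v) := by
  unfold gaussian3
  exact Measure.isProbabilityMeasure_map (MeasurableEquiv.measurable _).aemeasurable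

/-- The harmonic prior on `N` points of `ℝ³` with stiffness `α`, pinned at the origin
(`x_0 = 0`): the law of the chain whose increments are i.i.d. `N(0, (1/α)·I₃)`, i.e. the
probability measure with density proportional to `exp(-(α/2) Σ ‖x_j - x_{j+1}‖²)`,
normalized by quotienting out (pinning) the global translation. -/
def harmonicPrior (α : ℝ≥0) (N : ℕ) : Measure (Fin N → EuclideanSpace ℝ (Fin 3)) :=
  (Measure.pi fun _ : Fin N => gaussian3 α⁻¹).map
    (fun inc => fun k : Fin N => ∑ j ∈ Finset.univ.filter (fun j : Fin N => j < k), inc j)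

/-- The contiguous crop `x[i:i+M]` of a configuration of `N` points. -/
def crop (N M i : ℕ) (h : i + M ≤ N) (x : Fin N → EuclideanSpace ℝ (Fin 3)) :
    Fin M → EuclideanSpace ℝ (Fin 3) :=
  fun j => x ⟨i + j, by omega⟩

/-- Recentering a configuration at its first point (a global translation). -/
def recenter (M : ℕ) (hM : 0 < M) (y : Fin M → EuclideanSpace ℝ (Fin 3)) :
    Fin M → EuclideanSpace ℝ (Fin 3) :=
  fun j => y j - y ⟨0, hM⟩

/-- crop invariance of the linear-interpolation probability path. For fixed data
`x₁ ∈ ℝ^{3N}`, noise `x₀ ~ q^{(N)}` and `x_t = (1-t)·x₀ + t·x₁`, the law of the crop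
`x_t[i:i+M]` equals — up to a global translation (here: after recentering at the first crop
point) — the law of `(1-t)·y₀ + t·x₁[i:i+M]` with `y₀ ~ q^{(M)}`. -/
theorem crop_invariance_of_interpolation_path (α : ℝ≥0) (hα : 0 < α)
    (N M i : ℕ) (hM : 0 < M) (h : i + M ≤ N)
    (x₁ : Fin N → EuclideanSpace ℝ (Fin 3)) (t : ℝ) (ht : t ∈ Set.Icc (0:ℝ) 1) :
    (harmonicPrior α N).map
        (fun x₀ => recenter M hM (crop N M i h (fun k => (1 - t) • x₀ k + t • x₁ k)))
      = (harmonicPrior α M).map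
          (fun y₀ => recenter M hM (fun j => (1 - t) • y₀ j + t • crop N M i h x₁ j)) := by
  classical
  set f : Fin M → Fin N := fun l => ⟨i + (l : ℕ), by omega⟩ with hf
  have hfinj : Function.Injective f := by
    intro a b hab
    have : i + (a : ℕ) = i + (b : ℕ) := congrArg Fin.val hab
    exact Fin.ext (by omega)
  set F : (Fin M → EuclideanSpace ℝ (Fin 3)) → (Fin M → EuclideanSpace ℝ (Fin 3)) := fun y j =>
    (1 - t) • (∑ l ∈ Finset.univ.filter (fun l : Fin M => l < j), y l)
      + t • (crop N M i h x₁ j - crop N M i h x₁ ⟨0, hM⟩) with hFdef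
  have hcsN : Measurable (fun inc : Fin N → EuclideanSpace ℝ (Fin 3) =>
      fun k : Fin N => ∑ j ∈ Finset.univ.filter (fun j : Fin N => j < k), inc j) :=
    measurable_pi_lambda _ fun k => Finset.measurable_sum _ fun j _ => measurable_pi_apply j
  have hcsM : Measurable (fun inc : Fin M → EuclideanSpace ℝ (Fin 3) =>
      fun k : Fin M => ∑ j ∈ Finset.univ.filter (fun j : Fin M => j < k), inc j) :=
    measurable_pi_lambda _ fun k => Finset.measurable_sum _ fun j _ => measurable_pi_apply j
  have houtN : Measurable (fun x₀ : Fin N → EuclideanSpace ℝ (Fin 3) =>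
      recenter M hM (crop N M i h (fun k => (1 - t) • x₀ k + t • x₁ k))) := by
    unfold recenter crop
    fun_prop
  have houtM : Measurable (fun y₀ : Fin M → EuclideanSpace ℝ (Fin 3) =>
      recenter M hM (fun j => (1 - t) • y₀ j + t • crop N M i h x₁ j)) := by
    unfold recenter
    fun_prop
  have hproj : Measurable (fun x : Fin N → EuclideanSpace ℝ (Fin 3) => x ∘ f) :=
    measurable_pi_lambda _ fun l => measurable_pi_apply (f l)
  have hFm : Measurable F := by
    apply measurable_pi_lambda
    intro j
    exact ((Finset.measurable_sum _ fun l _ =>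
      measurable_pi_apply l).const_smul (1 - t)).add_const _
  have hL : (fun x₀ : Fin N → EuclideanSpace ℝ (Fin 3) =>
        recenter M hM (crop N M i h (fun k => (1 - t) • x₀ k + t • x₁ k)))
      ∘ (fun inc => fun k : Fin N =>
          ∑ j ∈ Finset.univ.filter (fun j : Fin N => j < k), inc j)
      = F ∘ (fun x => x ∘ f) := by
    funext inc
    funext j
    simp only [Function.comp, recenter, crop, hFdef, hf]
    rw [← sum_crop_shift hM h inc j (by omega) (by omega)]
    module
  have hR : (fun y₀ : Fin M → EuclideanSpace ℝ (Fin 3) =>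
        recenter M hM (fun j => (1 - t) • y₀ j + t • crop N M i h x₁ j))
      ∘ (fun inc => fun k : Fin M =>
          ∑ j ∈ Finset.univ.filter (fun j : Fin M => j < k), inc j)
      = F := by
    funext inc
    funext j
    simp only [Function.comp, recenter, hFdef]
    have h0 : ∑ j' ∈ Finset.univ.filter (fun j' : Fin M => j' < (⟨0, hM⟩ : Fin M)), inc j'
        = 0 := by
      apply Finset.sum_eq_zero
      intro l hl
      rw [Finset.mem_filter] at hl
      exact absurd hl.2 (by simp [Fin.lt_def])
    rw [h0]
    module
  unfold harmonicPrior
  rw [Measure.map_map houtN hcsN, Measure.map_map houtM hcsM, hL, hR,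
    ← Measure.map_map hFm hproj, pi_map_comp_injective _ f hfinj]
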